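/- arXiv:1904.01512 — 4 statements merged into one kernel-verified Lean document; each statement's English description precedes it below -/
import Mathlib

section
/- Let X be a real Hilbert space, ℒ : X → X a bounded self-adjoint operator, and ψ ∈ X (playing the role of φ') with ℒψ = 0. Suppose there exists c > 0 and a closed subspace Υ₀ = {u ∈ X : ⟨q, u⟩ = 0} (for some fixed q ∈ X with ⟨q, ψ⟩ = 0) such that ⟨ℒv, v⟩ ≥ c‖v‖² for all v ∈ Υ₀ ∩ {ψ}^⊥. Then there exist N > 0 and τ > 0 such that ⟨ℒv, v⟩ + 2N⟨q, v⟩² ≥ τ‖v‖² for all v ∈ {ψ}^⊥. -/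
open scoped RealInnerProductSpace

/-! Split `v ⊥ ψ` as `v = w + a • q` with `w ⊥ q`; since `q ⊥ ψ`, also `w ⊥ ψ`, so
`⟪L w, w⟫ ≥ c‖w‖²`. The remaining terms of `⟪L v, v⟫` cost at most
`2‖L‖‖w‖‖a • q‖ + ‖L‖‖a • q‖²`. By AM–GM the cross term is absorbed by half of `c‖w‖²`, and
the penalty `2N⟪q, v⟫² = 2N‖q‖²‖a • q‖²` pays for everything else once `N` is large. -/

section

variable {E : Type*} [NormedAddCommGroup E] [InnerProductSpace ℝ E]

theorem ContinuousLinearMap.inner_apply_add_self_ge (L : E →L[ℝ] E) (w u : E) :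
    ⟪L w, w⟫ - 2 * ‖L‖ * ‖w‖ * ‖u‖ - ‖L‖ * ‖u‖ ^ 2 ≤ ⟪L (w + u), w + u⟫ := by
  have bound : ∀ x y : E, |⟪L x, y⟫| ≤ ‖L‖ * ‖x‖ * ‖y‖ := fun x y =>
    (abs_real_inner_le_norm _ _).trans
      (mul_le_mul_of_nonneg_right (L.le_opNorm x) (norm_nonneg y))
  have hwu := abs_le.mp (bound w u)
  have huw := abs_le.mp (bound u w)
  have huu := abs_le.mp (bound u u)
  rw [map_add, inner_add_left, inner_add_right, inner_add_right]
  nlinarith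

theorem exists_smul_inner_sub_eq_zero (q v : E) (hq : q ≠ 0) :
    ∃ a : ℝ, ⟪q, v - a • q⟫ = 0 ∧ ‖v‖ ^ 2 = ‖v - a • q‖ ^ 2 + ‖a • q‖ ^ 2 ∧
      ⟪q, v⟫ ^ 2 = ‖q‖ ^ 2 * ‖a • q‖ ^ 2 := by
  set a := ⟪q, v⟫ / ‖q‖ ^ 2 with ha
  have horth : ⟪q, v - a • q⟫ = 0 := by
    have : ‖q‖ ^ 2 ≠ 0 := by positivity
    rw [inner_sub_right, real_inner_smul_right, real_inner_self_eq_norm_sq,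
      div_mul_cancel₀ _ this, sub_self]
  refine ⟨a, horth, ?_, ?_⟩
  · conv_lhs => rw [← sub_add_cancel v (a • q)]
    rw [norm_add_sq_real, real_inner_smul_right, real_inner_comm, horth]
    ring
  · rw [norm_smul, mul_pow, Real.norm_eq_abs, sq_abs, ha, div_pow]
    field_simp

theorem half_mul_sq_add_sq_le_add_of_quadratic_le {c M s t Q : ℝ} (hc : 0 < c)
    (hQ : c * s ^ 2 - 2 * M * s * t - M * t ^ 2 ≤ Q) :
    c / 2 * (s ^ 2 + t ^ 2) ≤ Q + (2 * M ^ 2 / c + M + c / 2) * t ^ 2 := by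
  have amgm : 2 * M * s * t ≤ c / 2 * s ^ 2 + 2 * M ^ 2 / c * t ^ 2 := by
    have key : 0 ≤ (c * s - 2 * M * t) ^ 2 / (2 * c) := by positivity
    have : (c * s - 2 * M * t) ^ 2 / (2 * c) =
        c / 2 * s ^ 2 + 2 * M ^ 2 / c * t ^ 2 - 2 * M * s * t := by
      field_simp
      ring
    linarith
  nlinarith

end

theorem penalized_coercivity_general {X : Type*} [NormedAddCommGroup X] [InnerProductSpace ℝ X]
    (L : X →L[ℝ] X)
    (ψ q : X) (hq : q ≠ 0) (hqψ : ⟪q, ψ⟫ = 0)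
    (c : ℝ) (hc : 0 < c)
    (hcoer : ∀ v : X, ⟪q, v⟫ = 0 → ⟪ψ, v⟫ = 0 → ⟪L v, v⟫ ≥ c * ‖v‖ ^ 2) :
    ∃ N > (0:ℝ), ∃ τ > (0:ℝ), ∀ v : X, ⟪ψ, v⟫ = 0 →
      ⟪L v, v⟫ + 2 * N * ⟪q, v⟫ ^ 2 ≥ τ * ‖v‖ ^ 2 := by
  set K := 2 * ‖L‖ ^ 2 / c + ‖L‖ + c / 2
  refine ⟨K / (2 * ‖q‖ ^ 2), by positivity, c / 2, by positivity, fun v hψv => ?_⟩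
  obtain ⟨a, hqw, hnorm, hpen⟩ := exists_smul_inner_sub_eq_zero q v hq
  have hψw : ⟪ψ, v - a • q⟫ = 0 := by
    rw [inner_sub_right, real_inner_smul_right, real_inner_comm q ψ, hqψ, hψv, mul_zero,
      sub_zero]
  have hperturb := L.inner_apply_add_self_ge (v - a • q) (a • q)
  rw [sub_add_cancel] at hperturb
  have hpenalty : 2 * (K / (2 * ‖q‖ ^ 2)) * ⟪q, v⟫ ^ 2 = K * ‖a • q‖ ^ 2 := by
    rw [hpen]
    field_simp
  rw [ge_iff_le, hnorm, hpenalty]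
  exact half_mul_sq_add_sq_le_add_of_quadratic_le hc (by linarith [hcoer _ hqw hψw])

/-- if the quadratic form of a bounded self-adjoint operator `ℒ` with
`ℒψ = 0` is coercive on `Υ₀ ∩ {ψ}^⊥`, where `Υ₀ = {u : ⟪q, u⟫ = 0}` and `⟪q, ψ⟫ = 0`,
then adding the penalization `2N⟪q, v⟫²` makes it coercive on all of `{ψ}^⊥`. -/
theorem penalized_coercivity {X : Type*} [NormedAddCommGroup X] [InnerProductSpace ℝ X]
    [CompleteSpace X] (L : X →L[ℝ] X)
    (hsa : ∀ u v : X, ⟪L u, v⟫ = ⟪u, L v⟫)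
    (ψ q : X) (hq : q ≠ 0) (hLψ : L ψ = 0) (hqψ : ⟪q, ψ⟫ = 0)
    (c : ℝ) (hc : 0 < c)
    (hcoer : ∀ v : X, ⟪q, v⟫ = 0 → ⟪ψ, v⟫ = 0 → ⟪L v, v⟫ ≥ c * ‖v‖ ^ 2) :
    ∃ N > (0:ℝ), ∃ τ > (0:ℝ), ∀ v : X, ⟪ψ, v⟫ = 0 →
      ⟪L v, v⟫ + 2 * N * ⟪q, v⟫ ^ 2 ≥ τ * ‖v‖ ^ 2 :=
  penalized_coercivity_general L ψ q hq hqψ c hc hcoer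
end

section
/- Let φ(x) = a + b[dn²(2K(k)x/L, k) − E(k)/K(k)] with a = 8√10 K(k)[K(k)k² − 2K(k) + 3E(k)]/L², b = 24√10 K(k)²/L², ω = 384(k⁴ − k² + 1)K(k)⁴/L⁴, and A = −(2048√10/3)(k² − 2)K(k)⁶(2k² − 1)(k² + 1)/L⁶. Then φ is an L-periodic solution of φ'''' + ωφ − (1/3)φ³ + A = 0. -/
/-- the dnoidal profile `φ(x) = a + b[dn²(2Kx/L, k) − E/K]`, with the
explicit constants `a, b, ω, A` of the paper, is an `L`-periodic solution of the
traveling-wave equation `φ'''' + ωφ − (1/3)φ³ + A = 0` for the modified Kawahara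
equation.  The Jacobi function `dn(·,k)` is axiomatized by its smoothness, its
first-order identity `(dn')² = (1 − dn²)(dn² − 1 + k²)`, the second-order ODE
`dn'' = (2 − k²)dn − 2dn³` and its real period `2K`. -/
theorem dnoidal_solves_kawahara_ode (k L a b ω A K E : ℝ)
    (hk : k ∈ Set.Ioo (0:ℝ) 1) (hL : 0 < L) (hK : 0 < K)
    (dn : ℝ → ℝ) (hdn : ContDiff ℝ (⊤ : ℕ∞) dn) (hdn0 : dn 0 = 1) (hdn0' : deriv dn 0 = 0)
    (hfirst : ∀ t : ℝ, (deriv dn t) ^ 2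
      = (1 - (dn t) ^ 2) * ((dn t) ^ 2 - 1 + k ^ 2))
    (hode : ∀ t : ℝ, deriv (deriv dn) t = (2 - k ^ 2) * dn t - 2 * (dn t) ^ 3)
    (hper : Function.Periodic dn (2 * K))
    (ha : a = 8 * Real.sqrt 10 * K * (K * k ^ 2 - 2 * K + 3 * E) / L ^ 2)
    (hb : b = 24 * Real.sqrt 10 * K ^ 2 / L ^ 2)
    (hω : ω = 384 * (k ^ 4 - k ^ 2 + 1) * K ^ 4 / L ^ 4)
    (hA : A = -(2048 * Real.sqrt 10 / 3)
      * (k ^ 2 - 2) * K ^ 6 * (2 * k ^ 2 - 1) * (k ^ 2 + 1) / L ^ 6)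
    (φ : ℝ → ℝ)
    (hφ : ∀ x : ℝ, φ x = a + b * ((dn (2 * K * x / L)) ^ 2 - E / K)) :
    Function.Periodic φ L ∧
    ∀ x : ℝ, iteratedDeriv 4 φ x + ω * φ x - (1 / 3) * (φ x) ^ 3 + A = 0 := by
  have hL0 : L ≠ 0 := ne_of_gt hL
  have hK0 : K ≠ 0 := ne_of_gt hK
  set c : ℝ := 2 * K / L with hc
  have hcx : ∀ x : ℝ, 2 * K * x / L = c * x := fun x => by rw [hc]; ring
  have hdnInf : ContDiff ℝ ((⊤ : ℕ∞) : WithTop ℕ∞) dn := hdn.of_le (mod_cast le_top)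
  have hd1 : Differentiable ℝ dn := (contDiff_infty_iff_deriv.mp hdnInf).1
  have hd2 : Differentiable ℝ (deriv dn) :=
    (contDiff_infty_iff_deriv.mp (contDiff_infty_iff_deriv.mp hdnInf).2).1
  have Hdn : ∀ t, HasDerivAt dn (deriv dn t) t := fun t => (hd1 t).hasDerivAt
  have Hdn' : ∀ t, HasDerivAt (deriv dn) ((2 - k ^ 2) * dn t - 2 * (dn t) ^ 3) t := fun t => by
    have h := (hd2 t).hasDerivAt
    rwa [hode t] at h
  have hlin : ∀ x : ℝ, HasDerivAt (fun y : ℝ => c * y) c x := fun x => by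
    simpa using (hasDerivAt_id x).const_mul c
  have Hu : ∀ x : ℝ, HasDerivAt (fun y => dn (c * y)) (deriv dn (c * x) * c) x := fun x =>
    (Hdn (c * x)).comp x (hlin x)
  have Hv : ∀ x : ℝ, HasDerivAt (fun y => deriv dn (c * y))
      (((2 - k ^ 2) * dn (c * x) - 2 * (dn (c * x)) ^ 3) * c) x := fun x =>
    (Hdn' (c * x)).comp x (hlin x)
  have hφeq : φ = fun y => a + b * ((dn (c * y)) ^ 2 - E / K) :=
    funext fun y => by rw [hφ y, hcx y]
  -- first derivative
  have d1 : deriv φ = fun y => 2 * b * c * (dn (c * y) * deriv dn (c * y)) := by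
    funext x
    refine HasDerivAt.deriv ?_
    rw [hφeq]
    have H := ((((Hu x).pow 2).sub_const (E / K)).const_mul b).const_add a
    refine H.congr_deriv (Eq.symm ?_)
    push_cast
    ring
  -- second derivative
  have d2 : deriv (fun y => 2 * b * c * (dn (c * y) * deriv dn (c * y)))
      = fun y => b * c ^ 2 * (-6 * (dn (c * y)) ^ 4 + 4 * (2 - k ^ 2) * (dn (c * y)) ^ 2
          + 2 * (k ^ 2 - 1)) := by
    funext x
    refine HasDerivAt.deriv ?_
    have H := ((Hu x).mul (Hv x)).const_mul (2 * b * c)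
    refine H.congr_deriv (Eq.symm ?_)
    linear_combination (-2 * b * c ^ 2) * hfirst (c * x)
  -- third derivative
  have d3 : deriv (fun y => b * c ^ 2 * (-6 * (dn (c * y)) ^ 4
        + 4 * (2 - k ^ 2) * (dn (c * y)) ^ 2 + 2 * (k ^ 2 - 1)))
      = fun y => b * c ^ 3 * ((-24 * (dn (c * y)) ^ 3 + 8 * (2 - k ^ 2) * dn (c * y))
          * deriv dn (c * y)) := by
    funext x
    refine HasDerivAt.deriv ?_
    have H := (((((Hu x).pow 4).const_mul (-6 : ℝ)).add
      (((Hu x).pow 2).const_mul (4 * (2 - k ^ 2)))).add_const (2 * (k ^ 2 - 1))).const_mul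
      (b * c ^ 2)
    refine H.congr_deriv (Eq.symm ?_)
    push_cast
    ring
  -- fourth derivative
  have d4 : deriv (fun y => b * c ^ 3 * ((-24 * (dn (c * y)) ^ 3
        + 8 * (2 - k ^ 2) * dn (c * y)) * deriv dn (c * y)))
      = fun y => b * c ^ 4 * ((-72 * (dn (c * y)) ^ 2 + 8 * (2 - k ^ 2))
          * ((1 - (dn (c * y)) ^ 2) * ((dn (c * y)) ^ 2 - 1 + k ^ 2))
        + (-24 * (dn (c * y)) ^ 3 + 8 * (2 - k ^ 2) * dn (c * y))
          * ((2 - k ^ 2) * dn (c * y) - 2 * (dn (c * y)) ^ 3)) := by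
    funext x
    refine HasDerivAt.deriv ?_
    have H := (((((Hu x).pow 3).const_mul (-24 : ℝ)).add
      ((Hu x).const_mul (8 * (2 - k ^ 2)))).mul (Hv x)).const_mul (b * c ^ 3)
    refine H.congr_deriv (Eq.symm ?_)
    simp only [Pi.add_apply, Pi.pow_apply]
    push_cast
    linear_combination (-(b * c ^ 4) * (-72 * (dn (c * x)) ^ 2 + 8 * (2 - k ^ 2))) * hfirst (c * x)
  have hi4 : iteratedDeriv 4 φ = fun y => b * c ^ 4 * ((-72 * (dn (c * y)) ^ 2
        + 8 * (2 - k ^ 2))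
          * ((1 - (dn (c * y)) ^ 2) * ((dn (c * y)) ^ 2 - 1 + k ^ 2))
        + (-24 * (dn (c * y)) ^ 3 + 8 * (2 - k ^ 2) * dn (c * y))
          * ((2 - k ^ 2) * dn (c * y) - 2 * (dn (c * y)) ^ 3)) := by
    have e4 : iteratedDeriv 4 φ = deriv (deriv (deriv (deriv φ))) := by
      rw [show (4 : ℕ) = 3 + 1 from rfl, iteratedDeriv_succ,
        show (3 : ℕ) = 2 + 1 from rfl, iteratedDeriv_succ,
        show (2 : ℕ) = 1 + 1 from rfl, iteratedDeriv_succ, iteratedDeriv_one]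
    rw [e4, d1, d2, d3, d4]
  constructor
  · intro x
    have hx : 2 * K * (x + L) / L = 2 * K * x / L + 2 * K := by field_simp
    rw [hφ (x + L), hφ x, hx, hper]
  · intro x
    rw [hi4, hφ x, hcx x, ha, hb, hω, hA]
    set s : ℝ := Real.sqrt 10 with hsdef
    have hs : s ^ 2 = 10 := Real.sq_sqrt (by norm_num)
    have hs3 : s ^ 3 = 10 * s := by rw [pow_succ, hs]
    have hm : 8 * s * K * (K * k ^ 2 - 2 * K + 3 * E) / L ^ 2
        + 24 * s * K ^ 2 / L ^ 2 * ((dn (c * x)) ^ 2 - E / K)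
        = s * ((8 * K * (K * k ^ 2 - 2 * K + 3 * E) + 24 * K ^ 2 * (dn (c * x)) ^ 2
            - 24 * K * E) / L ^ 2) := by
      field_simp
      ring
    rw [hm, mul_pow, hs3, hc]
    field_simp
    ring
end

section
/- Let X be a real Hilbert space, ℒ a self-adjoint operator on X with exactly one negative eigenvalue (simple), kernel spanned by ψ, and the rest of its spectrum positive and bounded away from zero. Suppose Φ ∈ X satisfies ⟨ℒΦ, φ⟩ = 0 for all φ in a closed hyperplane Υ₀, and ⟨ℒΦ, Φ⟩ < 0. Then there exists c > 0 such that ⟨ℒv, v⟩ ≥ c‖v‖² for all v ∈ Υ₀ ∩ {ψ}^⊥. -/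
open scoped RealInnerProductSpace

private lemma quad_cs_aux {a b c : ℝ} (h : ∀ t : ℝ, 0 ≤ a * (t * t) + b * t + c) :
    b ^ 2 ≤ 4 * (a * c) := by
  have hd := discrim_le_zero h
  unfold discrim at hd
  nlinarith

/-- abstract coercivity lemma: let `ℒ` be a bounded self-adjoint
operator with exactly one (simple) negative eigenvalue, kernel spanned by `ψ`, and
the rest of its quadratic form positive and bounded away from zero.  If `Φ`
satisfies `⟨ℒΦ, u⟩ = 0` for all `u` in the hyperplane `Υ₀ = {u : ⟪q, u⟫ = 0}` and
`⟨ℒΦ, Φ⟩ < 0`, then `⟨ℒv, v⟩ ≥ c‖v‖²` on `Υ₀ ∩ {ψ}^⊥` for some `c > 0`. -/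
theorem coercivity_from_negative_direction {X : Type*} [NormedAddCommGroup X]
    [InnerProductSpace ℝ X] [CompleteSpace X]
    (L : X →L[ℝ] X) (hsa : ∀ u v : X, ⟪L u, v⟫ = ⟪u, L v⟫)
    (ψ χ : X) (hψ : ψ ≠ 0) (hχ : χ ≠ 0)
    (lam : ℝ) (hlam : lam < 0) (heig : L χ = lam • χ)
    (huniq : ∀ (μ : ℝ) (v : X), μ < 0 → v ≠ 0 → L v = μ • v → μ = lam ∧ ∃ t : ℝ, v = t • χ)
    (hker : ∀ v : X, L v = 0 ↔ ∃ t : ℝ, v = t • ψ)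
    (hgap : ∃ β > (0:ℝ), ∀ v : X, ⟪χ, v⟫ = 0 → ⟪ψ, v⟫ = 0 → ⟪L v, v⟫ ≥ β * ‖v‖ ^ 2)
    (q Φ : X) (hq : q ≠ 0)
    (hΦ : ∀ u : X, ⟪q, u⟫ = 0 → ⟪L Φ, u⟫ = 0)
    (hI : ⟪L Φ, Φ⟫ < 0) :
    ∃ c > (0:ℝ), ∀ v : X, ⟪q, v⟫ = 0 → ⟪ψ, v⟫ = 0 → ⟪L v, v⟫ ≥ c * ‖v‖ ^ 2 := by
  classical
  obtain ⟨β, hβ, hgap⟩ := hgap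
  have hLψ : L ψ = 0 := (hker ψ).mpr ⟨1, (one_smul ℝ ψ).symm⟩
  have hχ2 : (0:ℝ) < ‖χ‖ ^ 2 := by
    have := norm_pos_iff.mpr hχ; positivity
  have hψ2 : (0:ℝ) < ‖ψ‖ ^ 2 := by
    have := norm_pos_iff.mpr hψ; positivity
  have hχψ : ⟪χ, ψ⟫ = 0 := by
    have h1 : ⟪L χ, ψ⟫ = ⟪χ, L ψ⟫ := hsa χ ψ
    rw [heig, hLψ] at h1
    rw [real_inner_smul_left] at h1
    simp only [inner_zero_right] at h1
    rcases mul_eq_zero.mp h1 with h | h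
    · exact absurd h (ne_of_lt hlam)
    · exact h
  have hψχ : ⟪ψ, χ⟫ = 0 := by rw [real_inner_comm]; exact hχψ
  have hLuχ : ∀ u : X, ⟪χ, u⟫ = 0 → ⟪L u, χ⟫ = 0 := by
    intro u hu
    rw [hsa, heig, real_inner_smul_right, real_inner_comm, hu, mul_zero]
  have hLuψ : ∀ u : X, ⟪L u, ψ⟫ = 0 := by
    intro u
    rw [hsa, hLψ, inner_zero_right]
  -- general bilinear expansion
  have bexpand : ∀ (s t : ℝ) (u : X) (s' t' : ℝ) (u' : X),
      ⟪χ, u⟫ = 0 → ⟪ψ, u⟫ = 0 → ⟪χ, u'⟫ = 0 → ⟪ψ, u'⟫ = 0 →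
      ⟪L (s • χ + t • ψ + u), s' • χ + t' • ψ + u'⟫
        = lam * s * s' * ‖χ‖ ^ 2 + ⟪L u, u'⟫ := by
    intro s t u s' t' u' huχ huψ hu'χ hu'ψ
    have hL : L (s • χ + t • ψ + u) = (s * lam) • χ + L u := by
      simp [map_add, map_smul, heig, hLψ, smul_smul]
    rw [hL]
    simp only [inner_add_left, inner_add_right, real_inner_smul_left,
      real_inner_smul_right]
    rw [hχψ, hLuχ u huχ, hu'χ, hLuψ u, real_inner_self_eq_norm_sq]
    ring
  -- Cauchy–Schwarz for the quadratic form on {χ, ψ}ᗮ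
  have cs : ∀ u u' : X, ⟪χ, u⟫ = 0 → ⟪ψ, u⟫ = 0 → ⟪χ, u'⟫ = 0 → ⟪ψ, u'⟫ = 0 →
      ⟪L u, u'⟫ ^ 2 ≤ ⟪L u, u⟫ * ⟪L u', u'⟫ := by
    intro u u' huχ huψ hu'χ hu'ψ
    have key : ∀ t : ℝ, 0 ≤ ⟪L u', u'⟫ * (t * t) + (2 * ⟪L u, u'⟫) * t + ⟪L u, u⟫ := by
      intro t
      have hmem1 : ⟪χ, u + t • u'⟫ = 0 := by
        rw [inner_add_right, real_inner_smul_right, huχ, hu'χ]; ring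
      have hmem2 : ⟪ψ, u + t • u'⟫ = 0 := by
        rw [inner_add_right, real_inner_smul_right, huψ, hu'ψ]; ring
      have h0 := hgap _ hmem1 hmem2
      have hexp : ⟪L (u + t • u'), u + t • u'⟫
          = ⟪L u', u'⟫ * (t * t) + (2 * ⟪L u, u'⟫) * t + ⟪L u, u⟫ := by
        rw [map_add, map_smul, inner_add_left, inner_add_right, inner_add_right,
          real_inner_smul_left, real_inner_smul_left, real_inner_smul_right,
          real_inner_smul_right]
        have hsym : ⟪L u', u⟫ = ⟪L u, u'⟫ := by
          rw [hsa, real_inner_comm]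
        rw [hsym]; ring
      have hnn : (0:ℝ) ≤ β * ‖u + t • u'‖ ^ 2 := by positivity
      rw [hexp] at h0
      linarith
    have := quad_cs_aux key
    nlinarith
  -- decompose Φ
  set b : ℝ := ⟪χ, Φ⟫ / ‖χ‖ ^ 2 with hb_def
  set d : ℝ := ⟪ψ, Φ - b • χ⟫ / ‖ψ‖ ^ 2 with hd_def
  set w₀ : X := Φ - b • χ - d • ψ with hw₀_def
  have hΦeq : Φ = b • χ + d • ψ + w₀ := by rw [hw₀_def]; abel
  have hbχ : b * ‖χ‖ ^ 2 = ⟪χ, Φ⟫ := by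
    rw [hb_def]; exact div_mul_cancel₀ _ (ne_of_gt hχ2)
  have hdψ : d * ‖ψ‖ ^ 2 = ⟪ψ, Φ - b • χ⟫ := by
    rw [hd_def]; exact div_mul_cancel₀ _ (ne_of_gt hψ2)
  have hw₀χ : ⟪χ, w₀⟫ = 0 := by
    rw [hw₀_def, inner_sub_right, inner_sub_right, real_inner_smul_right,
      real_inner_smul_right, hχψ, real_inner_self_eq_norm_sq]
    linarith [hbχ]
  have hw₀ψ : ⟪ψ, w₀⟫ = 0 := by
    have hw' : w₀ = (Φ - b • χ) - d • ψ := hw₀_def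
    rw [hw', inner_sub_right, real_inner_smul_right, real_inner_self_eq_norm_sq]
    linarith [hdψ]
  clear_value b d w₀
  -- constants
  set A : ℝ := -lam * ‖χ‖ ^ 2 with hA_def
  have hA : 0 < A := by
    have hl : 0 < -lam := by linarith
    positivity
  set Q₀ : ℝ := ⟪L w₀, w₀⟫ with hQ₀_def
  have hQ₀ : 0 ≤ Q₀ := by
    have h1 := hgap w₀ hw₀χ hw₀ψ
    have hnn : (0:ℝ) ≤ β * ‖w₀‖ ^ 2 := by positivity
    exact le_trans hnn h1
  clear_value A Q₀
  have hIeq : ⟪L Φ, Φ⟫ = -(A * b ^ 2) + Q₀ := by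
    conv_lhs => rw [hΦeq]
    rw [bexpand b d w₀ b d w₀ hw₀χ hw₀ψ hw₀χ hw₀ψ]
    linear_combination b ^ 2 * hA_def - hQ₀_def
  have hQ₀lt : Q₀ < A * b ^ 2 := by rw [hIeq] at hI; linarith
  have hb2 : 0 < b ^ 2 := by nlinarith [sq_nonneg b]
  have hAb2 : 0 < A * b ^ 2 := mul_pos hA hb2
  -- norm bound for the quadratic form
  set M : ℝ := ‖L‖ + 1 with hM_def
  have hM : 0 < M := by positivity
  have hQM : ∀ u : X, ⟪L u, u⟫ ≤ M * ‖u‖ ^ 2 := by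
    intro u
    have h1 : ⟪L u, u⟫ ≤ ‖L u‖ * ‖u‖ := real_inner_le_norm _ _
    have h2 : ‖L u‖ ≤ ‖L‖ * ‖u‖ := L.le_opNorm u
    have h3 : ‖L u‖ * ‖u‖ ≤ ‖L‖ * ‖u‖ * ‖u‖ :=
      mul_le_mul_of_nonneg_right h2 (norm_nonneg u)
    have h5 : (0:ℝ) ≤ ‖u‖ ^ 2 := by positivity
    have h4 : ‖L‖ * ‖u‖ * ‖u‖ ≤ M * ‖u‖ ^ 2 := by
      rw [hM_def]; nlinarith [norm_nonneg u]
    linarith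
  clear_value M
  -- the constant
  set θ : ℝ := Q₀ / (A * b ^ 2) with hθ_def
  have hθ0 : 0 ≤ θ := by positivity
  have hθ1 : θ < 1 := by
    rw [hθ_def, div_lt_one hAb2]; exact hQ₀lt
  have hθeq : θ * (A * b ^ 2) = Q₀ := by
    rw [hθ_def]; exact div_mul_cancel₀ _ (ne_of_gt hAb2)
  clear_value θ
  set K : ℝ := 1 + θ * M * ‖χ‖ ^ 2 / A with hK_def
  have hK1 : (1:ℝ) ≤ K := by
    rw [hK_def]
    have h9 : 0 ≤ θ * M * ‖χ‖ ^ 2 / A :=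
      div_nonneg (mul_nonneg (mul_nonneg hθ0 hM.le) (sq_nonneg _)) hA.le
    linarith
  have hK : 0 < K := lt_of_lt_of_le one_pos hK1
  clear_value K
  have hAK : A * K = A + θ * M * ‖χ‖ ^ 2 := by
    rw [hK_def, mul_add, mul_one, ← mul_div_assoc, mul_div_cancel_left₀ _ (ne_of_gt hA)]
  have hθβ : 0 ≤ (1 - θ) * β := by
    have : 0 ≤ 1 - θ := by linarith
    positivity
  have hc_pos : 0 < (1 - θ) * β / K := div_pos (mul_pos (by linarith) hβ) hK
  refine ⟨(1 - θ) * β / K, hc_pos, ?_⟩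
  intro v hvq hvψ
  -- decompose v
  set a : ℝ := ⟪χ, v⟫ / ‖χ‖ ^ 2 with ha_def
  set w : X := v - a • χ with hw_def
  have hveq : v = a • χ + (0:ℝ) • ψ + w := by
    rw [hw_def]; rw [zero_smul, add_zero]; abel
  have haχ : a * ‖χ‖ ^ 2 = ⟪χ, v⟫ := by
    rw [ha_def]; exact div_mul_cancel₀ _ (ne_of_gt hχ2)
  have hwχ : ⟪χ, w⟫ = 0 := by
    rw [hw_def, inner_sub_right, real_inner_smul_right, real_inner_self_eq_norm_sq]
    linarith [haχ]
  have hwψ : ⟪ψ, w⟫ = 0 := by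
    rw [hw_def, inner_sub_right, real_inner_smul_right, hψχ, hvψ]; ring
  set Qw : ℝ := ⟪L w, w⟫ with hQw_def
  have hQwβ : β * ‖w‖ ^ 2 ≤ Qw := hgap w hwχ hwψ
  have hQw0 : 0 ≤ Qw := le_trans (by positivity) hQwβ
  have hQwM : Qw ≤ M * ‖w‖ ^ 2 := hQM w
  clear_value a w Qw
  -- the orthogonality constraint
  have hcross : ⟪L w₀, w⟫ = A * (a * b) := by
    have h0 : ⟪L Φ, v⟫ = 0 := hΦ v hvq
    have h1 : ⟪L Φ, v⟫ = lam * b * a * ‖χ‖ ^ 2 + ⟪L w₀, w⟫ := by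
      conv_lhs => rw [hΦeq, hveq]
      exact bexpand b d w₀ a 0 w hw₀χ hw₀ψ hwχ hwψ
    rw [h1] at h0
    linear_combination h0 - (a * b) * hA_def
  -- quadratic form of v
  have hQv : ⟪L v, v⟫ = -(A * a ^ 2) + Qw := by
    conv_lhs => rw [hveq]
    rw [bexpand a 0 w a 0 w hwχ hwψ hwχ hwψ]
    linear_combination a ^ 2 * hA_def - hQw_def
  -- Cauchy-Schwarz bound
  have hcs : (A * (a * b)) ^ 2 ≤ Q₀ * Qw := by
    rw [hQ₀_def, hQw_def, ← hcross]
    exact cs w₀ w hw₀χ hw₀ψ hwχ hwψ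
  -- deduce A * a ^ 2 ≤ θ * Qw
  have hAa : A * a ^ 2 ≤ θ * Qw := by
    have h1 : (A * a ^ 2) * (A * b ^ 2) ≤ (θ * Qw) * (A * b ^ 2) := by
      calc (A * a ^ 2) * (A * b ^ 2) = (A * (a * b)) ^ 2 := by ring
        _ ≤ Q₀ * Qw := hcs
        _ = (θ * (A * b ^ 2)) * Qw := by rw [hθeq]
        _ = (θ * Qw) * (A * b ^ 2) := by ring
    exact le_of_mul_le_mul_right h1 hAb2
  -- norm identity
  have hnv : ‖v‖ ^ 2 = a ^ 2 * ‖χ‖ ^ 2 + ‖w‖ ^ 2 := by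
    have hveq' : v = a • χ + w := by rw [hw_def]; abel
    have horth : ⟪a • χ, w⟫ = 0 := by
      rw [real_inner_smul_left, hwχ]; ring
    rw [hveq', norm_add_sq_real, horth, norm_smul, Real.norm_eq_abs, mul_pow, sq_abs]
    ring
  -- norm comparison : ‖v‖² ≤ K ‖w‖²
  have h1 : A * (a ^ 2 * ‖χ‖ ^ 2) ≤ θ * Qw * ‖χ‖ ^ 2 := by
    calc A * (a ^ 2 * ‖χ‖ ^ 2) = (A * a ^ 2) * ‖χ‖ ^ 2 := by ring
      _ ≤ (θ * Qw) * ‖χ‖ ^ 2 := mul_le_mul_of_nonneg_right hAa hχ2.le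
  have h2 : θ * Qw * ‖χ‖ ^ 2 ≤ θ * (M * ‖w‖ ^ 2) * ‖χ‖ ^ 2 :=
    mul_le_mul_of_nonneg_right (mul_le_mul_of_nonneg_left hQwM hθ0) hχ2.le
  have h3 : A * ‖v‖ ^ 2 ≤ A * (K * ‖w‖ ^ 2) := by
    calc A * ‖v‖ ^ 2 = A * (a ^ 2 * ‖χ‖ ^ 2) + A * ‖w‖ ^ 2 := by rw [hnv]; ring
      _ ≤ θ * (M * ‖w‖ ^ 2) * ‖χ‖ ^ 2 + A * ‖w‖ ^ 2 := by linarith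
      _ = (A + θ * M * ‖χ‖ ^ 2) * ‖w‖ ^ 2 := by ring
      _ = (A * K) * ‖w‖ ^ 2 := by rw [hAK]
      _ = A * (K * ‖w‖ ^ 2) := by ring
  have hnvK : ‖v‖ ^ 2 ≤ K * ‖w‖ ^ 2 := le_of_mul_le_mul_left h3 hA
  -- final chain
  have hc0 : 0 ≤ (1 - θ) * β / K := hc_pos.le
  have hcK : (1 - θ) * β / K * K = (1 - θ) * β :=
    div_mul_cancel₀ _ (ne_of_gt hK)
  rw [ge_iff_le]
  calc (1 - θ) * β / K * ‖v‖ ^ 2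
      ≤ (1 - θ) * β / K * (K * ‖w‖ ^ 2) := mul_le_mul_of_nonneg_left hnvK hc0
    _ = ((1 - θ) * β / K * K) * ‖w‖ ^ 2 := by ring
    _ = (1 - θ) * (β * ‖w‖ ^ 2) := by rw [hcK]; ring
    _ ≤ (1 - θ) * Qw := mul_le_mul_of_nonneg_left hQwβ (by linarith)
    _ = Qw - θ * Qw := by ring
    _ ≤ Qw - A * a ^ 2 := by linarith
    _ = -(A * a ^ 2) + Qw := by ring
    _ ≤ ⟪L v, v⟫ := le_of_eq hQv.symm
end

section
/- For k ∈ (0,1), the function g_k(x) = C·x·csch(πK(√(1−k²))x/K(k)) (C > 0 a constant) interpolates the positive Fourier coefficients of the dnoidal wave, i.e. g_k(n) = φ̂(n) for all integers n ≥ 1, and g_k is even, positive and satisfies (log g_k)''(x) < 0 for all x ≠ 0. -/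
open Real

/-- The complete elliptic integral of the first kind. -/
noncomputable def completeEllipticK (k : ℝ) : ℝ :=
  ∫ θ in (0:ℝ)..(π / 2), (Real.sqrt (1 - k ^ 2 * Real.sin θ ^ 2))⁻¹

lemma completeEllipticK_pos {k : ℝ} (hk : k ^ 2 < 1) : 0 < completeEllipticK k := by
  have hb : ∀ θ : ℝ, 0 < 1 - k ^ 2 * Real.sin θ ^ 2 := by
    intro θ
    nlinarith [Real.sin_sq_le_one θ, sq_nonneg k, sq_nonneg (Real.sin θ)]
  have hcont : Continuous fun θ : ℝ => (Real.sqrt (1 - k ^ 2 * Real.sin θ ^ 2))⁻¹ := by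
    apply Continuous.inv₀
    · exact (Real.continuous_sqrt.comp
        (continuous_const.sub (continuous_const.mul (Real.continuous_sin.pow 2))))
    · intro θ
      exact ne_of_gt (Real.sqrt_pos.mpr (hb θ))
  apply intervalIntegral.intervalIntegral_pos_of_pos_on
    (hcont.intervalIntegrable 0 (π / 2))
  · intro x _
    exact inv_pos.mpr (Real.sqrt_pos.mpr (hb x))
  · positivity

/-- for `k ∈ (0,1)` the function
`g_k(x) = C·x·csch(πK(√(1−k²))x / K(k))` with `C = Γ/2 > 0`, `Γ = 24√10 π²/L²`,
interpolates the positive Fourier coefficients `φ̂(n) = (Γ/2) n csch(nπK'/K)` of the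
dnoidal wave at the positive integers, is even and positive away from the origin,
and is strictly log-concave there: `(log g_k)''(x) < 0` for all `x ≠ 0`. -/
theorem dnoidal_coefficient_interpolation (k L : ℝ) (hk : k ∈ Set.Ioo (0:ℝ) 1)
    (hL : 0 < L)
    (K K' Γ C : ℝ)
    (hKdef : K = completeEllipticK k)
    (hK'def : K' = completeEllipticK (Real.sqrt (1 - k ^ 2)))
    (hΓ : Γ = 24 * Real.sqrt 10 * π ^ 2 / L ^ 2) (hC : C = Γ / 2)
    (g : ℝ → ℝ)
    (hg : ∀ x : ℝ, g x = C * x * (Real.sinh (π * K' * x / K))⁻¹)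
    (φhat : ℕ → ℝ)
    (hφhat : ∀ n : ℕ, 1 ≤ n → φhat n
      = (Γ / 2) * (n : ℝ) * (Real.sinh ((n : ℝ) * π * K' / K))⁻¹) :
    (0 < C) ∧
    (∀ n : ℕ, 1 ≤ n → g n = φhat n) ∧
    (∀ x : ℝ, g (-x) = g x) ∧
    (∀ x : ℝ, x ≠ 0 → 0 < g x) ∧
    (∀ x : ℝ, x ≠ 0 → iteratedDeriv 2 (fun y : ℝ => Real.log (g y)) x < 0) := by
  obtain ⟨hk0, hk1⟩ := hk
  have hk2 : k ^ 2 < 1 := by nlinarith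
  have hK : 0 < K := by
    rw [hKdef]; exact completeEllipticK_pos hk2
  have hK' : 0 < K' := by
    rw [hK'def]
    apply completeEllipticK_pos
    rw [Real.sq_sqrt (by nlinarith : (0:ℝ) ≤ 1 - k ^ 2)]
    nlinarith
  have hCpos : 0 < C := by
    rw [hC, hΓ]
    have h10 : (0:ℝ) < Real.sqrt 10 := Real.sqrt_pos.mpr (by norm_num)
    positivity
  -- the slope
  set a : ℝ := π * K' / K with ha
  have hapos : 0 < a := by
    have := Real.pi_pos
    positivity
  have harg : ∀ x : ℝ, π * K' * x / K = a * x := by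
    intro x; rw [ha]; ring
  refine ⟨hCpos, ?_, ?_, ?_, ?_⟩
  · -- interpolation
    intro n hn
    rw [hg, hφhat n hn, hC]
    ring_nf
  · -- evenness
    intro x
    rw [hg, hg, show π * K' * (-x) / K = -(π * K' * x / K) by ring, Real.sinh_neg,
      inv_neg]
    ring
  · -- positivity
    intro x hx
    rw [hg, harg]
    rcases lt_or_gt_of_ne hx with hneg | hpos
    · have hsneg : Real.sinh (a * x) < 0 := by
        have h1 : 0 < Real.sinh (-(a * x)) :=
          Real.sinh_pos_iff.mpr (by nlinarith)
        rw [Real.sinh_neg] at h1; linarith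
      have h2 : 0 < x * (Real.sinh (a * x))⁻¹ :=
        mul_pos_of_neg_of_neg hneg (inv_neg''.mpr hsneg)
      calc (0:ℝ) < C * (x * (Real.sinh (a*x))⁻¹) := mul_pos hCpos h2
        _ = C * x * (Real.sinh (a*x))⁻¹ := by ring
    · have hspos : 0 < Real.sinh (a * x) := Real.sinh_pos_iff.mpr (by positivity)
      have h2 := mul_pos hpos (inv_pos.mpr hspos)
      calc (0:ℝ) < C * (x * (Real.sinh (a*x))⁻¹) := mul_pos hCpos h2
        _ = C * x * (Real.sinh (a*x))⁻¹ := by ring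
  · -- log-concavity
    intro x hx
    set F : ℝ → ℝ := fun y => Real.log C + Real.log y - Real.log (Real.sinh (a * y))
      with hF
    set F' : ℝ → ℝ := fun y => y⁻¹ - Real.cosh (a * y) * a / Real.sinh (a * y) with hF'
    have hne : ∀ y : ℝ, y ≠ 0 → Real.sinh (a * y) ≠ 0 := fun y hy =>
      Real.sinh_ne_zero.mpr (mul_ne_zero (ne_of_gt hapos) hy)
    have h0 : ∀ᶠ y in nhds x, y ≠ 0 := eventually_ne_nhds hx
    -- log ∘ g agrees with F near x
    have hFg : (fun y : ℝ => Real.log (g y)) =ᶠ[nhds x] F := by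
      filter_upwards [h0] with y hy
      rw [hg, harg, hF]
      rw [Real.log_mul (mul_ne_zero (ne_of_gt hCpos) hy) (inv_ne_zero (hne y hy)),
        Real.log_mul (ne_of_gt hCpos) hy, Real.log_inv]
      ring
    -- F has derivative F' away from 0
    have hdF : ∀ y : ℝ, y ≠ 0 → HasDerivAt F (F' y) y := by
      intro y hy
      have hlin : HasDerivAt (fun z : ℝ => a * z) a y := by
        simpa using (hasDerivAt_id y).const_mul a
      have hsinh : HasDerivAt (fun z : ℝ => Real.sinh (a * z))
          (Real.cosh (a * y) * a) y := (Real.hasDerivAt_sinh (a * y)).comp y hlin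
      have hlog2 : HasDerivAt (fun z : ℝ => Real.log (Real.sinh (a * z)))
          (Real.cosh (a * y) * a / Real.sinh (a * y)) y := hsinh.log (hne y hy)
      exact ((Real.hasDerivAt_log hy).const_add (Real.log C)).sub hlog2
    -- F' has the explicit second derivative at x
    have hlin : HasDerivAt (fun z : ℝ => a * z) a x := by
      simpa using (hasDerivAt_id x).const_mul a
    have hu : HasDerivAt (fun z : ℝ => Real.cosh (a * z) * a)
        (Real.sinh (a * x) * a * a) x :=
      ((Real.hasDerivAt_cosh (a * x)).comp x hlin).mul_const a
    have hv : HasDerivAt (fun z : ℝ => Real.sinh (a * z))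
        (Real.cosh (a * x) * a) x := (Real.hasDerivAt_sinh (a * x)).comp x hlin
    have hdiv : HasDerivAt (fun z : ℝ => Real.cosh (a * z) * a / Real.sinh (a * z))
        ((Real.sinh (a * x) * a * a * Real.sinh (a * x)
          - Real.cosh (a * x) * a * (Real.cosh (a * x) * a)) / Real.sinh (a * x) ^ 2)
        x := hu.div hv (hne x hx)
    have hF'd : HasDerivAt F'
        (-(x ^ 2)⁻¹ - (Real.sinh (a * x) * a * a * Real.sinh (a * x)
          - Real.cosh (a * x) * a * (Real.cosh (a * x) * a)) / Real.sinh (a * x) ^ 2)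
        x := (hasDerivAt_inv hx).sub hdiv
    -- simplify numerator via cosh² = sinh² + 1
    have hnum : Real.sinh (a * x) * a * a * Real.sinh (a * x)
        - Real.cosh (a * x) * a * (Real.cosh (a * x) * a) = -(a ^ 2) := by
      nlinarith [Real.cosh_sq (a * x)]
    -- the second derivative of log ∘ g at x
    have hiter : iteratedDeriv 2 (fun y : ℝ => Real.log (g y)) x
        = -(x ^ 2)⁻¹ + a ^ 2 / Real.sinh (a * x) ^ 2 := by
      have e1 : iteratedDeriv 2 (fun y : ℝ => Real.log (g y)) x
          = deriv (deriv (fun y : ℝ => Real.log (g y))) x := by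
        rw [iteratedDeriv_succ, iteratedDeriv_one]
      have e2 : deriv (fun y : ℝ => Real.log (g y)) =ᶠ[nhds x] F' := by
        refine hFg.deriv.trans ?_
        filter_upwards [h0] with y hy
        exact (hdF y hy).deriv
      rw [e1, e2.deriv_eq, hF'd.deriv, hnum]
      ring
    rw [hiter]
    -- the inequality: a²x² < sinh(ax)²
    have haxne : a * x ≠ 0 := mul_ne_zero (ne_of_gt hapos) hx
    have habs : 0 < |a * x| := abs_pos.mpr haxne
    have hsl : |a * x| < Real.sinh |a * x| := Real.self_lt_sinh_iff.mpr habs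
    have hkey : a ^ 2 * x ^ 2 < Real.sinh (a * x) ^ 2 := by
      nlinarith [Real.abs_sinh (a * x), sq_abs (a * x), sq_abs (Real.sinh (a * x)),
        abs_nonneg (a * x)]
    have hx2 : 0 < x ^ 2 := by positivity
    have hS : 0 < Real.sinh (a * x) ^ 2 := lt_of_le_of_lt (by positivity) hkey
    have h1 : a ^ 2 / Real.sinh (a * x) ^ 2 < (x ^ 2)⁻¹ := by
      rw [inv_eq_one_div, div_lt_div_iff₀ hS hx2]
      nlinarith
    linarith
end
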